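/- arXiv:2005.14085 — 3 statements merged into one kernel-verified Lean document; each statement's English description precedes it below -/
import Mathlib

section
/- Bounded coinduction principle: let (I, C) be a generalized inference system with interpretation Gen(I,C) = CoInd(I restricted to Ind(I ∪ C)), where I restricted to a set S keeps only rules whose conclusion lies in S. If a set Spec of judgments satisfies (1) Spec ⊆ Ind(I ∪ C) and (2) Spec ⊆ F_I(Spec), then Spec ⊆ Gen(I,C). -/
/-- An inference system over a universe `U` of judgments: a set of rules,
each a pair `(Pr, c)` of a set of premises and a conclusion. -/
abbrev InfSys (U : Type*) := Set (Set U × U)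

/-- The operator associated with an inference system:
`Fop I S = {c | ∃ (Pr, c) ∈ I, Pr ⊆ S}`. -/
def Fop {U : Type*} (I : InfSys U) (S : Set U) : Set U :=
  {c | ∃ Pr, (Pr, c) ∈ I ∧ Pr ⊆ S}

/-- Judgments having a finite (well-founded) proof tree in `I`. -/
inductive Derivable {U : Type*} (I : InfSys U) : U → Prop
  | node {Pr : Set U} {c : U} : (Pr, c) ∈ I → (∀ j ∈ Pr, Derivable I j) → Derivable I c

/-- The inductive interpretation of an inference system. -/
def Ind {U : Type*} (I : InfSys U) : Set U := {j | Derivable I j}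

/-- The coinductive interpretation: the greatest fixed point of `Fop I`,
i.e. the union of all consistent sets. -/
def CoInd {U : Type*} (I : InfSys U) : Set U := ⋃₀ {S | S ⊆ Fop I S}

/-- Restriction of an inference system to rules whose conclusion lies in `S`. -/
def InfSys.restrict {U : Type*} (I : InfSys U) (S : Set U) : InfSys U :=
  {r ∈ I | r.2 ∈ S}

/-- Interpretation of a generalized inference system `(I, C)`. -/
def Gen {U : Type*} (I C : InfSys U) : Set U :=
  CoInd (I.restrict (Ind (I ∪ C)))

/-- Bounded coinduction principle: if `Spec ⊆ Ind (I ∪ C)` and `Spec ⊆ Fop I Spec`,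
then `Spec ⊆ Gen I C`. -/
theorem bounded_coinduction {U : Type*} (I C : InfSys U) (Spec : Set U)
    (h1 : Spec ⊆ Ind (I ∪ C)) (h2 : Spec ⊆ Fop I Spec) :
    Spec ⊆ Gen I C := by
  intro c hc
  exact ⟨Spec, fun x hx => by
    obtain ⟨Pr, hPr, hsub⟩ := h2 hx
    exact ⟨Pr, ⟨hPr, h1 hx⟩, hsub⟩, hc⟩
end

section
/- If the corule set is empty, the interpretation of the generalized inference system coincides with the inductive interpretation: Gen(I, ∅) = Ind(I). -/
/-- With an empty set of corules, the interpretation of the generalized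
inference system coincides with the inductive interpretation. -/
theorem gen_empty_corules {U : Type*} (I : InfSys U) :
    Gen I (∅ : InfSys U) = Ind I := by
  have hUnion : I ∪ (∅ : InfSys U) = I := Set.union_empty I
  simp only [Gen, hUnion]
  apply Set.Subset.antisymm
  · rintro c ⟨S, hS, hcS⟩
    obtain ⟨Pr, hPr, -⟩ := hS hcS
    exact hPr.2
  · intro c hc
    refine ⟨Ind I, ?_, hc⟩
    intro x hx
    obtain ⟨hr, hprem⟩ := hx
    exact ⟨_, ⟨hr, Derivable.node hr hprem⟩, hprem⟩
end

section
/- For the same generalized inference system for minimum of lists, the judgment min(L, 0) is NOT derivable, where L = 2:1:2:1:... , even though min(L,0) has an infinite proof tree using only the rules: no finite proof tree in the system extended with the coaxiom exists for min(1:L, 0). -/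
open Stream' (Seq)

/-- The inference system for the minimum of a possibly infinite list of naturals:
axiom `min([x], x)` and rule `min(u, y) ⟹ min(x:u, min x y)`. -/
def minSys : InfSys (Seq ℕ × ℕ) :=
  {r | (∃ x : ℕ, r = (∅, (Seq.cons x Seq.nil, x))) ∨
       (∃ (x y : ℕ) (u : Seq ℕ), r = ({(u, y)}, (Seq.cons x u, min x y)))}

/-- The corule system: coaxiom `min(x:u, x)` for every nonempty list. -/
def minCo : InfSys (Seq ℕ × ℕ) :=
  {r | ∃ (x : ℕ) (u : Seq ℕ), r = (∅, (Seq.cons x u, x))}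

/-- The infinite periodic list `L = 2:1:2:1:...`. -/
def L : Seq ℕ := Stream'.Seq.ofStream (Stream'.cycle [2, 1] (by simp))

lemma hL : L = Seq.cons 2 (Seq.cons 1 L) := by
  unfold L
  conv_lhs => rw [Stream'.cycle_eq, Stream'.cons_append_stream, Stream'.cons_append_stream,
    Stream'.nil_append_stream]
  rw [Stream'.Seq.ofStream_cons, Stream'.Seq.ofStream_cons]

lemma cons_eq_cons {a b : ℕ} {s t : Seq ℕ} (h : Seq.cons a s = Seq.cons b t) :
    a = b ∧ s = t := by
  constructor
  · have := congrArg Seq.head h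
    simpa using this
  · have := congrArg Seq.tail h
    simpa using this

lemma notDeriv : ∀ j, Derivable (minSys ∪ minCo) j →
    j ≠ (Seq.cons 1 L, 0) ∧ j ≠ ((L : Seq ℕ), 0) := by
  intro j h
  induction h with
  | @node Pr c hr hprem ih =>
    rw [Set.mem_union] at hr
    rcases hr with hr | hr
    · simp only [minSys, Set.mem_setOf_eq] at hr
      rcases hr with ⟨x, hx⟩ | ⟨x, y, u, hx⟩
      · rw [Prod.ext_iff] at hx
        obtain ⟨hP, hc⟩ := hx
        subst hc
        constructor <;> intro he <;> rw [Prod.ext_iff] at he <;>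
          obtain ⟨h1, h2⟩ := he <;> simp at h1 h2 <;> subst h2
        · exact absurd h1.1 (by norm_num)
        · rw [hL] at h1
          exact absurd (cons_eq_cons h1).1 (by norm_num)
      · rw [Prod.ext_iff] at hx
        obtain ⟨hP, hc⟩ := hx
        subst hc; subst hP
        constructor <;> intro he <;> rw [Prod.ext_iff] at he <;>
          obtain ⟨h1, h2⟩ := he <;> simp at h1 h2
        · obtain ⟨hx1, hu⟩ := h1
          subst hx1; subst hu
          have hy : y = 0 := by omega
          subst hy
          exact (ih (L, 0) rfl).2 rfl
        · rw [hL] at h1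
          obtain ⟨hx1, hu⟩ := cons_eq_cons h1
          subst hx1; subst hu
          have hy : y = 0 := by omega
          subst hy
          exact (ih (Seq.cons 1 L, 0) rfl).1 rfl
    · simp only [minCo, Set.mem_setOf_eq] at hr
      obtain ⟨x, u, hx⟩ := hr
      rw [Prod.ext_iff] at hx
      obtain ⟨hP, hc⟩ := hx
      subst hc
      constructor <;> intro he <;> rw [Prod.ext_iff] at he <;>
        obtain ⟨h1, h2⟩ := he <;> simp at h1 h2 <;> subst h2
      · exact absurd h1.1 (by norm_num)
      · rw [hL] at h1
        exact absurd (cons_eq_cons h1).1 (by norm_num)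

/-- The judgment `min(L, 0)` is not derivable in the generalized inference system,
even though it has a (possibly infinite) proof tree using only the rules;
indeed no finite proof tree in the system extended with the coaxiom exists
for `min(1:L, 0)`. -/
theorem min_L_zero_not_derivable :
    (L, 0) ∉ Gen minSys minCo ∧ (L, 0) ∈ CoInd minSys ∧
      (Seq.cons 1 L, 0) ∉ Ind (minSys ∪ minCo) := by
  refine ⟨?_, ?_, ?_⟩
  · intro hmem
    obtain ⟨S, hS, hLS⟩ := hmem
    obtain ⟨Pr, hr, _⟩ := hS hLS
    exact (notDeriv _ hr.2).2 rfl
  · refine ⟨{((L : Seq ℕ), 0), (Seq.cons 1 L, 0)}, ?_, by simp⟩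
    intro j hj
    rcases hj with hj | hj
    · subst hj
      refine ⟨{(Seq.cons 1 L, 0)}, Or.inr ⟨2, 0, Seq.cons 1 L, by rw [← hL]; rfl⟩, by simp⟩
    · simp only [Set.mem_singleton_iff] at hj
      subst hj
      refine ⟨{((L : Seq ℕ), 0)}, Or.inr ⟨1, 0, L, rfl⟩, by simp⟩
  · intro h
    exact (notDeriv _ h).1 rfl
end
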